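/- Assume β_t + γ̇_t > 0 for all t ∈ [0, T]. If θ_t ≤ 0 for all t (in-flow with momentum) then h_t := −ε_t⁻¹(D_t + λ_t E_t) ≥ 0 for all t ∈ [0, T]; if θ_t ≥ 0 for all t (in-flow with reversion) then h_t ≤ 0 for all t ∈ [0, T]. -/

import Mathlib

open Set MeasureTheory Matrix

/-- Market parameters: time horizon `T > 0` and bounded measurable coefficient functions
`β, λ, ε, θ, σ : [0,T] → ℝ` with `β > 0`, `σ ≥ 0`, `λ` and `ε` positive and bounded away
from zero, `λ` differentiable with bounded derivative `lam'`, and the no-arbitrage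
condition `2β_t + γ̇_t > 0` where `γ = log λ` (so `γ̇ = λ'/λ`). -/
structure Params where
  T : ℝ
  beta : ℝ → ℝ
  lam : ℝ → ℝ
  lam' : ℝ → ℝ
  eps : ℝ → ℝ
  theta : ℝ → ℝ
  sigma : ℝ → ℝ
  hT : 0 < T
  hbeta_meas : Measurable beta
  htheta_meas : Measurable theta
  hsigma_meas : Measurable sigma
  heps_meas : Measurable eps
  hbeta_bdd : ∃ M, ∀ t ∈ Icc 0 T, |beta t| ≤ M
  htheta_bdd : ∃ M, ∀ t ∈ Icc 0 T, |theta t| ≤ M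
  hsigma_bdd : ∃ M, ∀ t ∈ Icc 0 T, |sigma t| ≤ M
  hbeta_pos : ∀ t ∈ Icc 0 T, 0 < beta t
  hsigma_nonneg : ∀ t ∈ Icc 0 T, 0 ≤ sigma t
  heps_lb : ∃ c, 0 < c ∧ ∀ t ∈ Icc 0 T, c ≤ eps t
  heps_ub : ∃ M, ∀ t ∈ Icc 0 T, eps t ≤ M
  hlam_lb : ∃ c, 0 < c ∧ ∀ t ∈ Icc 0 T, c ≤ lam t
  hlam_ub : ∃ M, ∀ t ∈ Icc 0 T, lam t ≤ M
  hlam_deriv : ∀ t, HasDerivAt lam (lam' t) t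
  hlam'_bdd : ∃ M, ∀ t, |lam' t| ≤ M
  hnoarb : ∀ t ∈ Icc 0 T, 0 < 2 * beta t + lam' t / lam t

/-- `γ̇_t = λ'_t / λ_t`, the derivative of `γ = log λ`. -/
noncomputable def gammaDot (P : Params) (t : ℝ) : ℝ := P.lam' t / P.lam t

/-- The backward Riccati ODE system on `[0,T]` with its terminal conditions. -/
def IsRiccatiSol (P : Params) (A B C D E F K : ℝ → ℝ) : Prop :=
  (∀ t ∈ Icc (0:ℝ) P.T,
      HasDerivAt A ((P.eps t)⁻¹ * (A t + P.lam t * B t) ^ 2) t) ∧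
  A P.T = P.lam P.T ∧
  (∀ t ∈ Icc (0:ℝ) P.T,
      HasDerivAt B ((P.eps t)⁻¹ * (A t + P.lam t * B t) * (B t + P.lam t * C t)
        + P.beta t * B t) t) ∧
  B P.T = -1 ∧
  (∀ t ∈ Icc (0:ℝ) P.T,
      HasDerivAt C ((P.eps t)⁻¹ * (B t + P.lam t * C t) ^ 2 + 2 * P.beta t * C t
        - (P.lam t)⁻¹ * (2 * P.beta t + gammaDot P t)) t) ∧
  C P.T = (P.lam P.T)⁻¹ ∧
  (∀ t ∈ Icc (0:ℝ) P.T,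
      HasDerivAt D ((P.eps t)⁻¹ * (A t + P.lam t * B t) * (D t + P.lam t * E t)
        - P.theta t * (A t - D t)) t) ∧
  D P.T = 0 ∧
  (∀ t ∈ Icc (0:ℝ) P.T,
      HasDerivAt E ((P.eps t)⁻¹ * (B t + P.lam t * C t) * (D t + P.lam t * E t)
        - P.theta t * (B t - E t) + P.beta t * E t) t) ∧
  E P.T = 0 ∧
  (∀ t ∈ Icc (0:ℝ) P.T,
      HasDerivAt F ((P.eps t)⁻¹ * (D t + P.lam t * E t) ^ 2
        - 2 * P.theta t * (D t - F t)) t) ∧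
  F P.T = 0 ∧
  (∀ t ∈ Icc (0:ℝ) P.T,
      HasDerivAt K (-(P.sigma t) ^ 2 * (A t - 2 * D t + F t) / 2) t) ∧
  K P.T = 0

/-!
Put `H = B + λC`, `G̃ = (A - D) + λ(B - E)` and `G = D + λE`. Differentiating the Riccati
system, each of the pairs `(H, 1 - λC)`, `(G̃, E - B)` and `(-σG, σE)` (with `σθ ≤ 0`) satisfies
a backward cooperative system of differential inequalities `u' ≤ p u - q v`, `v' ≤ w v - r u`
with bounded `p, q, r, w` and `q, r ≥ 0`: the sign of `q` is `β + γ̇ > 0`, that of `r` is `H ≥ 0`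
from the first pair, and the discarded forcing terms have a sign because `β > 0`, `G̃ ≥ 0` and
`E ≥ B`. The terminal values are nonnegative, and such a system keeps the nonnegative quadrant
backward in time, since `W = min(u, 0)² + min(v, 0)²` is differentiable with `W' ≥ -L W` and
`W(T) = 0`. Taking `σ = ±1` in the last pair gives the sign of `G`, hence of `h = -ε⁻¹G`.
-/

open Filter Asymptotics Topology

theorem Filter.boundedAtFilter_principal_of_abs_le {α : Type*} {s : Set α} {f : α → ℝ} {M : ℝ}
    (h : ∀ t ∈ s, |f t| ≤ M) : BoundedAtFilter (𝓟 s) f :=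
  isBigO_principal.2 ⟨M, fun t ht => by simpa using h t ht⟩

theorem Filter.BoundedAtFilter.exists_abs_le_principal {α : Type*} {s : Set α} {f : α → ℝ}
    (hf : BoundedAtFilter (𝓟 s) f) : ∃ K, 0 ≤ K ∧ ∀ t ∈ s, |f t| ≤ K := by
  obtain ⟨K, hK0, hK⟩ := hf.exists_nonneg
  exact ⟨K, hK0, fun t ht => by simpa using isBigOWith_principal.1 hK t ht⟩

theorem Filter.boundedAtFilter_principal_inv {α : Type*} {s : Set α} {f : α → ℝ} {c : ℝ}
    (hc : 0 < c) (h : ∀ t ∈ s, c ≤ f t) : BoundedAtFilter (𝓟 s) fun t => (f t)⁻¹ :=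
  boundedAtFilter_principal_of_abs_le (M := c⁻¹) fun t ht => by
    rw [abs_inv, abs_of_pos (hc.trans_le (h t ht))]
    exact inv_anti₀ hc (h t ht)

theorem boundedAtFilter_Icc_of_hasDerivAt {a b : ℝ} {f f' : ℝ → ℝ}
    (hf : ∀ t ∈ Icc a b, HasDerivAt f (f' t) t) : BoundedAtFilter (𝓟 (Icc a b)) f :=
  (HasDerivAt.continuousOn hf).isBigO_principal isCompact_Icc
    (by norm_num : ‖(1 : ℝ)‖ ≠ 0)

theorem hasDerivAt_min_zero_sq (x : ℝ) :
    HasDerivAt (fun y : ℝ => min y 0 ^ 2) (2 * min x 0) x := by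
  rcases lt_trichotomy x 0 with hx | rfl | hx
  · have hloc : (fun y : ℝ => min y 0 ^ 2) =ᶠ[𝓝 x] fun y => y ^ 2 := by
      filter_upwards [eventually_lt_nhds hx] with y hy
      rw [min_eq_left hy.le]
    refine ((hasDerivAt_pow 2 x).congr_of_eventuallyEq hloc).congr_deriv ?_
    rw [min_eq_left hx.le]
    ring
  · rw [hasDerivAt_iff_isLittleO_nhds_zero]
    simp only [zero_add, min_self, sub_zero, mul_zero, smul_zero, zero_pow two_ne_zero]
    refine IsBigO.trans_isLittleO (isBigO_of_le _ fun h => ?_) (isLittleO_pow_id one_lt_two)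
    rw [norm_pow, norm_pow]
    exact pow_le_pow_left₀ (norm_nonneg _) (by rcases le_total h 0 with h | h <;> simp [h]) 2
  · have hloc : (fun y : ℝ => min y 0 ^ 2) =ᶠ[𝓝 x] fun _ => 0 := by
      filter_upwards [eventually_gt_nhds hx] with y hy
      simp [min_eq_right hy.le]
    refine ((hasDerivAt_const x 0).congr_of_eventuallyEq hloc).congr_deriv ?_
    simp [min_eq_right hx.le]

theorem HasDerivAt.min_zero_sq {f : ℝ → ℝ} {f' x : ℝ} (hf : HasDerivAt f f' x) :
    HasDerivAt (fun y => min (f y) 0 ^ 2) (2 * min (f x) 0 * f') x :=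
  (hasDerivAt_min_zero_sq (f x)).comp x hf

theorem eq_zero_of_nonneg_of_hasDerivAt_ge {a b L : ℝ} {W W' : ℝ → ℝ}
    (hW0 : ∀ t ∈ Icc a b, 0 ≤ W t) (hW : ∀ t ∈ Icc a b, HasDerivAt W (W' t) t)
    (hW' : ∀ t ∈ Icc a b, -L * W t ≤ W' t) (hb : W b = 0) : ∀ t ∈ Icc a b, W t = 0 := by
  have hZ : ∀ t ∈ Icc a b, HasDerivAt (fun s => Real.exp (L * s) * W s)
      (Real.exp (L * t) * (L * W t + W' t)) t := fun t ht =>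
    (((hasDerivAt_id t).const_mul L).exp.mul (hW t ht)).congr_deriv (by simp only [id_eq]; ring)
  have hmono : MonotoneOn (fun s => Real.exp (L * s) * W s) (Icc a b) :=
    monotoneOn_of_hasDerivWithinAt_nonneg (convex_Icc a b)
      (fun t ht => (hZ t ht).continuousAt.continuousWithinAt)
      (fun t ht => (hZ t (interior_subset ht)).hasDerivWithinAt)
      fun t ht => mul_nonneg (Real.exp_pos _).le (by linarith [hW' t (interior_subset ht)])
  intro t ht
  have hle := hmono ht (right_mem_Icc.2 (ht.1.trans ht.2)) ht.2
  simp only [hb, mul_zero] at hle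
  exact le_antisymm (nonpos_of_mul_nonpos_right hle (Real.exp_pos _)) (hW0 t ht)

theorem neg_le_min_zero_mul_of_le {x x' y a b Ka Kb : ℝ} (hx' : x' ≤ a * x - b * y)
    (ha : |a| ≤ Ka) (hb0 : 0 ≤ b) (hb : b ≤ Kb) :
    -(Ka * min x 0 ^ 2 + Kb * (min x 0 * min y 0)) ≤ min x 0 * x' := by
  rcases le_total 0 x with hx | hx
  · simp [min_eq_right hx]
  · rw [min_eq_left hx]
    have hy : min y 0 ≤ y := min_le_left y 0
    have hy0 : min y 0 ≤ 0 := min_le_right y 0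
    have := neg_abs_le a
    nlinarith [mul_nonneg (neg_nonneg.2 hx) (sub_nonneg.2 hy), mul_nonneg hb0 (sq_nonneg x),
      mul_le_mul_of_nonneg_right hb (mul_nonneg_of_nonpos_of_nonpos hx hy0),
      mul_nonneg (sub_nonneg.2 hb) (mul_nonneg_of_nonpos_of_nonpos hx hy0)]

theorem nonneg_of_deriv_le_cooperative {a b : ℝ} {u v p q r w : ℝ → ℝ}
    (hp : BoundedAtFilter (𝓟 (Icc a b)) p) (hq : BoundedAtFilter (𝓟 (Icc a b)) q)
    (hr : BoundedAtFilter (𝓟 (Icc a b)) r) (hw : BoundedAtFilter (𝓟 (Icc a b)) w)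
    (hq0 : ∀ t ∈ Icc a b, 0 ≤ q t) (hr0 : ∀ t ∈ Icc a b, 0 ≤ r t)
    (hu : ∀ t ∈ Icc a b, DifferentiableAt ℝ u t) (hv : ∀ t ∈ Icc a b, DifferentiableAt ℝ v t)
    (hu' : ∀ t ∈ Icc a b, deriv u t ≤ p t * u t - q t * v t)
    (hv' : ∀ t ∈ Icc a b, deriv v t ≤ w t * v t - r t * u t)
    (hub : 0 ≤ u b) (hvb : 0 ≤ v b) :
    ∀ t ∈ Icc a b, 0 ≤ u t ∧ 0 ≤ v t := by
  obtain ⟨Kp, hKp0, hKp⟩ := hp.exists_abs_le_principal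
  obtain ⟨Kq, hKq0, hKq⟩ := hq.exists_abs_le_principal
  obtain ⟨Kr, hKr0, hKr⟩ := hr.exists_abs_le_principal
  obtain ⟨Kw, hKw0, hKw⟩ := hw.exists_abs_le_principal
  have hW := eq_zero_of_nonneg_of_hasDerivAt_ge (L := 2 * (Kp + Kq + Kr + Kw))
    (W := fun t => min (u t) 0 ^ 2 + min (v t) 0 ^ 2) (fun t _ => by positivity)
    (fun t ht => (hu t ht).hasDerivAt.min_zero_sq.add (hv t ht).hasDerivAt.min_zero_sq)
    (fun t ht => by
      have hm := neg_le_min_zero_mul_of_le (hu' t ht) (hKp t ht) (hq0 t ht)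
        ((le_abs_self _).trans (hKq t ht))
      have hn := neg_le_min_zero_mul_of_le (hv' t ht) (hKw t ht) (hr0 t ht)
        ((le_abs_self _).trans (hKr t ht))
      have hmn : 0 ≤ min (u t) 0 * min (v t) 0 :=
        mul_nonneg_of_nonpos_of_nonpos (min_le_right _ _) (min_le_right _ _)
      nlinarith [sq_nonneg (min (u t) 0 - min (v t) 0), mul_nonneg hKq0 hmn,
        mul_nonneg hKr0 hmn, mul_nonneg hKp0 (sq_nonneg (min (u t) 0)),
        mul_nonneg hKw0 (sq_nonneg (min (v t) 0))])
    (by simp [hub, hvb])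
  intro t ht
  obtain ⟨hmu, hmv⟩ := (add_eq_zero_iff_of_nonneg (sq_nonneg _) (sq_nonneg _)).1 (hW t ht)
  exact ⟨min_eq_right_iff.1 (pow_eq_zero_iff two_ne_zero |>.1 hmu),
    min_eq_right_iff.1 (pow_eq_zero_iff two_ne_zero |>.1 hmv)⟩

namespace Params

variable (P : Params)

theorem eps_pos : ∀ t ∈ Icc 0 P.T, 0 < P.eps t :=
  let ⟨_, hc, h⟩ := P.heps_lb
  fun t ht => hc.trans_le (h t ht)

theorem lam_pos : ∀ t ∈ Icc 0 P.T, 0 < P.lam t :=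
  let ⟨_, hc, h⟩ := P.hlam_lb
  fun t ht => hc.trans_le (h t ht)

theorem boundedAtFilter_beta : BoundedAtFilter (𝓟 (Icc 0 P.T)) P.beta :=
  let ⟨_, h⟩ := P.hbeta_bdd
  boundedAtFilter_principal_of_abs_le h

theorem boundedAtFilter_theta : BoundedAtFilter (𝓟 (Icc 0 P.T)) P.theta :=
  let ⟨_, h⟩ := P.htheta_bdd
  boundedAtFilter_principal_of_abs_le h

theorem boundedAtFilter_lam : BoundedAtFilter (𝓟 (Icc 0 P.T)) P.lam :=
  let ⟨_, h⟩ := P.hlam_ub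
  boundedAtFilter_principal_of_abs_le fun t ht => (abs_of_pos (P.lam_pos t ht)).trans_le (h t ht)

theorem boundedAtFilter_eps_inv : BoundedAtFilter (𝓟 (Icc 0 P.T)) fun t => (P.eps t)⁻¹ :=
  let ⟨_, hc, h⟩ := P.heps_lb
  boundedAtFilter_principal_inv hc h

theorem boundedAtFilter_gammaDot : BoundedAtFilter (𝓟 (Icc 0 P.T)) (gammaDot P) := by
  obtain ⟨_, hlam'⟩ := P.hlam'_bdd
  obtain ⟨_, hc, hlam⟩ := P.hlam_lb
  exact (boundedAtFilter_principal_of_abs_le fun t (_ : t ∈ Icc 0 P.T) => hlam' t).mul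
    (boundedAtFilter_principal_inv hc hlam)

end Params

noncomputable def riccatiRate (P : Params) (A B C : ℝ → ℝ) (t : ℝ) : ℝ :=
  (P.eps t)⁻¹ * (A t + P.lam t * B t + P.lam t * (B t + P.lam t * C t))

namespace IsRiccatiSol

variable {P : Params} {A B C D E F K : ℝ → ℝ}

theorem boundedAtFilter_riccatiRate (hsol : IsRiccatiSol P A B C D E F K) :
    BoundedAtFilter (𝓟 (Icc 0 P.T)) (riccatiRate P A B C) := by
  obtain ⟨hA, -, hB, -, hC, -⟩ := hsol
  have hA := boundedAtFilter_Icc_of_hasDerivAt hA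
  have hB := boundedAtFilter_Icc_of_hasDerivAt hB
  have hC := boundedAtFilter_Icc_of_hasDerivAt hC
  exact P.boundedAtFilter_eps_inv.mul ((hA.add (P.boundedAtFilter_lam.mul hB)).add
    (P.boundedAtFilter_lam.mul (hB.add (P.boundedAtFilter_lam.mul hC))))

theorem boundedAtFilter_eps_inv_mul_B_add_lam_mul_C (hsol : IsRiccatiSol P A B C D E F K) :
    BoundedAtFilter (𝓟 (Icc 0 P.T)) fun t => (P.eps t)⁻¹ * (B t + P.lam t * C t) := by
  obtain ⟨-, -, hB, -, hC, -⟩ := hsol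
  exact P.boundedAtFilter_eps_inv.mul ((boundedAtFilter_Icc_of_hasDerivAt hB).add
    (P.boundedAtFilter_lam.mul (boundedAtFilter_Icc_of_hasDerivAt hC)))

theorem hasDerivAt_B_add_lam_mul_C (hsol : IsRiccatiSol P A B C D E F K) :
    ∀ t ∈ Icc 0 P.T, HasDerivAt (fun s => B s + P.lam s * C s)
      ((riccatiRate P A B C t + P.beta t) * (B t + P.lam t * C t)
        - (P.beta t + gammaDot P t) * (1 - P.lam t * C t) - P.beta t) t := by
  obtain ⟨-, -, hB, -, hC, -⟩ := hsol
  intro t ht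
  refine ((hB t ht).add ((P.hlam_deriv t).mul (hC t ht))).congr_deriv ?_
  have := (P.lam_pos t ht).ne'
  simp only [riccatiRate, gammaDot]
  field_simp
  ring

theorem hasDerivAt_one_sub_lam_mul_C (hsol : IsRiccatiSol P A B C D E F K) :
    ∀ t ∈ Icc 0 P.T, HasDerivAt (fun s => 1 - P.lam s * C s)
      ((2 * P.beta t + gammaDot P t) * (1 - P.lam t * C t)
        - (P.eps t)⁻¹ * P.lam t * (B t + P.lam t * C t) ^ 2) t := by
  obtain ⟨-, -, -, -, hC, -⟩ := hsol
  intro t ht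
  refine (((P.hlam_deriv t).mul (hC t ht)).const_sub 1).congr_deriv ?_
  have := (P.lam_pos t ht).ne'
  simp only [gammaDot]
  field_simp
  ring

theorem hasDerivAt_A_sub_D_add_lam_mul_B_sub_E (hsol : IsRiccatiSol P A B C D E F K) :
    ∀ t ∈ Icc 0 P.T, HasDerivAt (fun s => A s - D s + P.lam s * (B s - E s))
      ((riccatiRate P A B C t + P.theta t) * (A t - D t + P.lam t * (B t - E t))
        - P.lam t * (P.beta t + gammaDot P t) * (E t - B t)) t := by
  obtain ⟨hA, -, hB, -, -, -, hD, -, hE, -⟩ := hsol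
  intro t ht
  refine (((hA t ht).sub (hD t ht)).add
    ((P.hlam_deriv t).mul ((hB t ht).sub (hE t ht)))).congr_deriv ?_
  have := (P.lam_pos t ht).ne'
  simp only [riccatiRate, gammaDot, Pi.sub_apply]
  field_simp
  ring

theorem hasDerivAt_E_sub_B (hsol : IsRiccatiSol P A B C D E F K) :
    ∀ t ∈ Icc 0 P.T, HasDerivAt (fun s => E s - B s)
      ((P.theta t + P.beta t) * (E t - B t)
        - (P.eps t)⁻¹ * (B t + P.lam t * C t) * (A t - D t + P.lam t * (B t - E t))) t := by
  obtain ⟨-, -, hB, -, -, -, -, -, hE, -⟩ := hsol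
  exact fun t ht => ((hE t ht).sub (hB t ht)).congr_deriv (by ring)

theorem hasDerivAt_D_add_lam_mul_E (hsol : IsRiccatiSol P A B C D E F K) :
    ∀ t ∈ Icc 0 P.T, HasDerivAt (fun s => D s + P.lam s * E s)
      (riccatiRate P A B C t * (D t + P.lam t * E t)
        - P.theta t * (A t - D t + P.lam t * (B t - E t))
        + P.lam t * (P.beta t + gammaDot P t) * E t) t := by
  obtain ⟨-, -, -, -, -, -, hD, -, hE, -⟩ := hsol
  intro t ht
  refine ((hD t ht).add ((P.hlam_deriv t).mul (hE t ht))).congr_deriv ?_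
  have := (P.lam_pos t ht).ne'
  simp only [riccatiRate, gammaDot]
  field_simp
  ring

theorem B_add_lam_mul_C_nonneg_and_lam_mul_C_le_one (hsol : IsRiccatiSol P A B C D E F K)
    (hstrong : ∀ t ∈ Icc (0:ℝ) P.T, 0 < P.beta t + gammaDot P t) :
    ∀ t ∈ Icc 0 P.T, 0 ≤ B t + P.lam t * C t ∧ P.lam t * C t ≤ 1 := by
  have hH := hsol.hasDerivAt_B_add_lam_mul_C
  have hJ := hsol.hasDerivAt_one_sub_lam_mul_C
  have hlamT := (P.lam_pos P.T (right_mem_Icc.2 P.hT.le)).ne'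
  refine fun t ht => (nonneg_of_deriv_le_cooperative (r := 0)
    (hsol.boundedAtFilter_riccatiRate.add P.boundedAtFilter_beta)
    (P.boundedAtFilter_beta.add P.boundedAtFilter_gammaDot) (const_boundedAtFilter _ 0)
    (((const_boundedAtFilter _ 2).mul P.boundedAtFilter_beta).add P.boundedAtFilter_gammaDot)
    (fun t ht => (hstrong t ht).le) (fun _ _ => le_rfl)
    (fun t ht => (hH t ht).differentiableAt) (fun t ht => (hJ t ht).differentiableAt)
    (fun t ht => ?_) (fun t ht => ?_) ?_ ?_ t ht).imp_right sub_nonneg.1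
  · rw [(hH t ht).deriv]
    simp only [Pi.add_apply]
    linarith [P.hbeta_pos t ht]
  · rw [(hJ t ht).deriv]
    simp only [Pi.add_apply, Pi.mul_apply, Function.const_apply, Pi.zero_apply]
    have := mul_nonneg (inv_pos.2 (P.eps_pos t ht)).le (P.lam_pos t ht).le
    nlinarith [mul_nonneg this (sq_nonneg (B t + P.lam t * C t))]
  all_goals
    obtain ⟨-, -, -, hBT, -, hCT, -⟩ := hsol
    simp [hBT, hCT, hlamT]

theorem A_sub_D_add_lam_mul_B_sub_E_nonneg_and_B_le_E (hsol : IsRiccatiSol P A B C D E F K)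
    (hstrong : ∀ t ∈ Icc (0:ℝ) P.T, 0 < P.beta t + gammaDot P t) :
    ∀ t ∈ Icc 0 P.T, 0 ≤ A t - D t + P.lam t * (B t - E t) ∧ B t ≤ E t := by
  have hG := hsol.hasDerivAt_A_sub_D_add_lam_mul_B_sub_E
  have hV := hsol.hasDerivAt_E_sub_B
  have hH := hsol.B_add_lam_mul_C_nonneg_and_lam_mul_C_le_one hstrong
  refine fun t ht => (nonneg_of_deriv_le_cooperative
    (hsol.boundedAtFilter_riccatiRate.add P.boundedAtFilter_theta)
    (P.boundedAtFilter_lam.mul (P.boundedAtFilter_beta.add P.boundedAtFilter_gammaDot))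
    hsol.boundedAtFilter_eps_inv_mul_B_add_lam_mul_C
    (P.boundedAtFilter_theta.add P.boundedAtFilter_beta)
    (fun t ht => mul_nonneg (P.lam_pos t ht).le (hstrong t ht).le)
    (fun t ht => mul_nonneg (inv_pos.2 (P.eps_pos t ht)).le (hH t ht).1)
    (fun t ht => (hG t ht).differentiableAt) (fun t ht => (hV t ht).differentiableAt)
    (fun t ht => (hG t ht).deriv.le) (fun t ht => (hV t ht).deriv.le) ?_ ?_ t ht).imp_right
    sub_nonneg.1
  all_goals
    obtain ⟨-, hAT, -, hBT, -, -, -, hDT, -, hET, -⟩ := hsol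
    simp [hAT, hBT, hDT, hET]

theorem mul_D_add_lam_mul_E_nonpos_and_mul_E_nonneg (hsol : IsRiccatiSol P A B C D E F K)
    (hstrong : ∀ t ∈ Icc (0:ℝ) P.T, 0 < P.beta t + gammaDot P t) {σ : ℝ}
    (hσ : ∀ t ∈ Icc 0 P.T, σ * P.theta t ≤ 0) :
    ∀ t ∈ Icc 0 P.T, σ * (D t + P.lam t * E t) ≤ 0 ∧ 0 ≤ σ * E t := by
  have hU t (ht : t ∈ Icc 0 P.T) := ((hsol.hasDerivAt_D_add_lam_mul_E t ht).const_mul σ).neg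
  have hH := hsol.B_add_lam_mul_C_nonneg_and_lam_mul_C_le_one hstrong
  have hG := hsol.A_sub_D_add_lam_mul_B_sub_E_nonneg_and_B_le_E hstrong
  have hp := hsol.boundedAtFilter_riccatiRate
  have hr := hsol.boundedAtFilter_eps_inv_mul_B_add_lam_mul_C
  obtain ⟨-, -, -, -, -, -, -, hDT, hE, hET, -⟩ := hsol
  have hV t (ht : t ∈ Icc 0 P.T) := (hE t ht).const_mul σ
  refine fun t ht => (nonneg_of_deriv_le_cooperative hp
    (P.boundedAtFilter_lam.mul (P.boundedAtFilter_beta.add P.boundedAtFilter_gammaDot))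
    hr P.boundedAtFilter_beta
    (fun t ht => mul_nonneg (P.lam_pos t ht).le (hstrong t ht).le)
    (fun t ht => mul_nonneg (inv_pos.2 (P.eps_pos t ht)).le (hH t ht).1)
    (fun t ht => (hU t ht).differentiableAt) (fun t ht => (hV t ht).differentiableAt)
    (fun t ht => ?_) (fun t ht => ?_) ?_ ?_ t ht).imp_left neg_nonneg.1
  · rw [(hU t ht).deriv]
    simp only [Pi.neg_apply, Pi.mul_apply, Pi.add_apply]
    nlinarith [mul_nonpos_of_nonpos_of_nonneg (hσ t ht) (hG t ht).1]
  · rw [(hV t ht).deriv]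
    simp only [Pi.neg_apply]
    nlinarith [mul_nonneg_of_nonpos_of_nonpos (hσ t ht) (sub_nonpos.2 (hG t ht).2)]
  all_goals simp [hDT, hET]

end IsRiccatiSol

/-- Assume `β_t + γ̇_t > 0` on `[0,T]`. If `θ ≤ 0` (momentum) then
`h_t := −ε_t⁻¹(D_t + λ_t E_t) ≥ 0` on `[0,T]`; if `θ ≥ 0` (reversion) then `h_t ≤ 0`. -/
theorem feedback_h_sign (P : Params)
    (hstrong : ∀ t ∈ Icc (0:ℝ) P.T, 0 < P.beta t + gammaDot P t)
    (A B C D E F K : ℝ → ℝ) (hsol : IsRiccatiSol P A B C D E F K) :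
    ((∀ t ∈ Icc (0:ℝ) P.T, P.theta t ≤ 0) →
        ∀ t ∈ Icc (0:ℝ) P.T, 0 ≤ -(P.eps t)⁻¹ * (D t + P.lam t * E t)) ∧
    ((∀ t ∈ Icc (0:ℝ) P.T, 0 ≤ P.theta t) →
        ∀ t ∈ Icc (0:ℝ) P.T, -(P.eps t)⁻¹ * (D t + P.lam t * E t) ≤ 0) := by
  have hsign (σ : ℝ) (hσ : ∀ t ∈ Icc (0:ℝ) P.T, σ * P.theta t ≤ 0) :
      ∀ t ∈ Icc (0:ℝ) P.T, 0 ≤ σ * (-(P.eps t)⁻¹ * (D t + P.lam t * E t)) := fun t ht =>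
    calc 0 ≤ (P.eps t)⁻¹ * -(σ * (D t + P.lam t * E t)) :=
          mul_nonneg (inv_pos.2 (P.eps_pos t ht)).le
            (neg_nonneg.2 (hsol.mul_D_add_lam_mul_E_nonpos_and_mul_E_nonneg hstrong hσ t ht).1)
      _ = σ * (-(P.eps t)⁻¹ * (D t + P.lam t * E t)) := by ring
  refine ⟨fun hθ t ht => ?_, fun hθ t ht => ?_⟩
  · simpa using hsign 1 (fun t ht => by simpa using hθ t ht) t ht
  · simpa using hsign (-1) (fun t ht => by simpa using hθ t ht) t ht
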